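/- Let v, ṽ : [0,∞) → ℝ be differentiable functions satisfying dv/dτ = G(τ) - β v(τ) and dṽ/dτ = G̃(τ) - β ṽ(τ) for some β > 0, where the monotonicity condition (G(τ) - G̃(τ))·(v(τ) - ṽ(τ)) ≤ 0 holds for all τ ≥ 0. Then |v(τ) - ṽ(τ)|² ≤ e^{-2βτ} |v(0) - ṽ(0)|² for all τ ≥ 0. -/

import Mathlib

/-- Monotonicity-based exponential contraction of value iterations (scalar case). -/
theorem stmt0 (β : ℝ) (hβ : 0 < β) (v vt G Gt : ℝ → ℝ)
    (hv : ∀ τ, 0 ≤ τ → HasDerivAt v (G τ - β * v τ) τ)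
    (hvt : ∀ τ, 0 ≤ τ → HasDerivAt vt (Gt τ - β * vt τ) τ)
    (hmono : ∀ τ, 0 ≤ τ → (G τ - Gt τ) * (v τ - vt τ) ≤ 0) :
    ∀ τ, 0 ≤ τ → |v τ - vt τ| ^ 2 ≤ Real.exp (-2 * β * τ) * |v 0 - vt 0| ^ 2 := by
  set g : ℝ → ℝ := fun τ => Real.exp (2 * β * τ) * (v τ - vt τ) ^ 2 with hg
  have hgd : ∀ τ, 0 ≤ τ → HasDerivAt g
      (Real.exp (2 * β * τ) * (2 * ((G τ - Gt τ) * (v τ - vt τ)))) τ := by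
    intro τ hτ
    have he : HasDerivAt (fun τ => Real.exp (2 * β * τ)) (Real.exp (2 * β * τ) * (2 * β)) τ := by
      simpa using ((hasDerivAt_id τ).const_mul (2 * β)).exp
    have hw : HasDerivAt (fun τ => v τ - vt τ)
        ((G τ - β * v τ) - (Gt τ - β * vt τ)) τ := (hv τ hτ).sub (hvt τ hτ)
    have hw2 : HasDerivAt (fun τ => (v τ - vt τ) ^ 2)
        (2 * (v τ - vt τ) * ((G τ - β * v τ) - (Gt τ - β * vt τ))) τ := by
      simpa [pow_two, Function.comp_def] using ((hasDerivAt_pow 2 (v τ - vt τ)).comp τ hw)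
    have : HasDerivAt (fun τ => Real.exp (2 * β * τ) * (v τ - vt τ) ^ 2) _ τ := he.mul hw2
    convert this using 1
    ring
  have hanti : AntitoneOn g (Set.Ici (0 : ℝ)) := by
    apply antitoneOn_of_deriv_nonpos (convex_Ici 0)
    · exact fun x hx => ((hgd x hx).continuousAt).continuousWithinAt
    · intro x hx
      rw [interior_Ici] at hx
      exact ((hgd x (le_of_lt hx)).differentiableAt).differentiableWithinAt
    · intro x hx
      rw [interior_Ici] at hx
      rw [(hgd x (le_of_lt hx)).deriv]
      have := hmono x (le_of_lt hx)
      have he := (Real.exp_pos (2 * β * x)).le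
      nlinarith
  intro τ hτ
  have hle : g τ ≤ g 0 := hanti (Set.self_mem_Ici) hτ hτ
  have h0 : g 0 = (v 0 - vt 0) ^ 2 := by simp [hg]
  have hexp : Real.exp (-2 * β * τ) = (Real.exp (2 * β * τ))⁻¹ := by
    rw [← Real.exp_neg]; ring_nf
  rw [sq_abs, sq_abs, hexp]
  rw [h0, hg] at hle
  have hp := Real.exp_pos (2 * β * τ)
  rw [inv_mul_eq_div, le_div_iff₀ hp]
  simp only at hle
  linarith [hle]
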